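/- For all n ≥ 0 and k ≥ 2, a_{2n+1}(132, q_k) = s_n(132, k(k−1)···21), where q_k = (2k−1)(2k)(2k−3)(2k−2)···3412 is the alternating pattern of length 2k. In particular for k = 2, the number of alternating 132-avoiding permutations of length 2n+1 avoiding 3412 is 1, and for k = 3, a_{2n+1}(132, 563412) = (n² − n + 2)/2 for n ≥ 1. -/

import Mathlib

/-!
In an alternating 132-avoiding permutation `w` of length `2n+1` the valleys are right-to-left
minima, and valley `j` lies below peak `i` exactly when some peak `l ≤ j` lies weakly below
peak `i`. Hence `w` is determined by the pattern `u` of its peaks, which avoids 132. Conversely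
every 132-avoiding `u` arises: rank the positions by the keys `(u i, n+1)` for peak `i` and
`(min (u 0, …, u j), n - j)` for valley `j`. In an occurrence of `q_k` the larger entry of each
pair is an ascent top, hence a peak, and is paired with the valley just before it, so `w`
contains `q_k` iff `u` contains `k ⋯ 21`.

For `k = 2` only the identity avoids 132 and 21. For `k = 3` the permutations avoiding 132
and 321 are the identity and the exchanges of two adjacent initial blocks, one for each pair
`a < b` of positions, which gives `1 + n(n-1)/2`.
-/

open Equiv

/-- The word `w` contains the pattern `p`: some subsequence of `w` is
order-isomorphic to `p`. -/
def Contains {α β : Type*} [LT α] [LT β] {n k : ℕ} (w : Fin n → α) (p : Fin k → β) : Prop :=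
  ∃ f : Fin k → Fin n, StrictMono f ∧ ∀ i j : Fin k, p i < p j ↔ w (f i) < w (f j)

/-- The pattern 132 (written with 0-indexed values as (0,2,1)). -/
def pat132 : Fin 3 → ℕ := ![0, 2, 1]

/-- `w` avoids the pattern 132. -/
def Avoids132 {n : ℕ} (w : Equiv.Perm (Fin n)) : Prop :=
  ¬ Contains (fun i => w i) pat132

/-- Pattern containment between permutations. -/
def ContainsP {n k : ℕ} (w : Equiv.Perm (Fin n)) (p : Equiv.Perm (Fin k)) : Prop :=
  Contains (fun i => w i) (fun i => p i)

/-- `w` is (up-down) alternating: `w 0 < w 1 > w 2 < w 3 > ⋯` (0-indexed). -/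
def Alternating {m : ℕ} (w : Equiv.Perm (Fin m)) : Prop :=
  ∀ i : ℕ, ∀ h : i + 1 < m,
    (i % 2 = 0 → w ⟨i, by omega⟩ < w ⟨i + 1, h⟩) ∧
    (i % 2 = 1 → w ⟨i + 1, h⟩ < w ⟨i, by omega⟩)

/-- The even-indexed (in 1-indexed terms: `w₂, w₄, …, w₂ₙ`) entries of `w`
are order-isomorphic to `u`. -/
def OrderIsoEven {n : ℕ} (w : Equiv.Perm (Fin (2 * n + 1))) (u : Equiv.Perm (Fin n)) : Prop :=
  ∀ i j : Fin n, u i < u j ↔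
    w ⟨2 * (i : ℕ) + 1, by have := i.isLt; omega⟩ < w ⟨2 * (j : ℕ) + 1, by have := j.isLt; omega⟩

/-- The pattern `q_k = (2k-1)(2k)(2k-3)(2k-2)⋯3412`, with 0-indexed values. -/
def qpat (k : ℕ) : Fin (2 * k) → ℕ := fun i =>
  if (i : ℕ) % 2 = 0 then 2 * k - (i : ℕ) - 2 else 2 * k - (i : ℕ)

/-- The decreasing pattern `k(k-1)⋯21`, with 0-indexed values. -/
def decpat (k : ℕ) : Fin k → ℕ := fun i => k - 1 - (i : ℕ)


open Function

theorem lt_iff_lt_of_lt_imp_lt {ι α β : Type*} [LinearOrder α] [Preorder β] {f : ι → α}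
    {g : ι → β} (hf : Injective f) (h : ∀ x y, f x < f y → g x < g y) (x y : ι) :
    f x < f y ↔ g x < g y := by
  refine ⟨h x y, fun hg => ?_⟩
  rcases lt_trichotomy (f x) (f y) with hxy | hxy | hxy
  · exact hxy
  · exact absurd hg (hf hxy ▸ lt_irrefl _)
  · exact absurd (h y x hxy) hg.not_gt

theorem Equiv.Perm.eq_of_lt_iff_lt {m : ℕ} {σ τ : Perm (Fin m)}
    (h : ∀ x y, σ x < σ y ↔ τ x < τ y) : σ = τ := by
  have hmono : StrictMono (τ ∘ σ.symm) := fun a b hab => by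
    simpa using (h (σ.symm a) (σ.symm b)).1 (by simpa using hab)
  exact Equiv.ext fun x => by simpa using (congrFun hmono.eq_id (σ x)).symm

theorem exists_perm_lt_iff_lt {α : Type*} [LinearOrder α] {m : ℕ} {f : Fin m → α}
    (hf : Injective f) : ∃ σ : Perm (Fin m), ∀ x y, σ x < σ y ↔ f x < f y := by
  have hmono : StrictMono (f ∘ Tuple.sort f) :=
    (Tuple.monotone_sort f).strictMono_of_injective (hf.comp (Tuple.sort f).injective)
  refine ⟨(Tuple.sort f).symm, fun x y => ?_⟩
  simpa using (hmono.lt_iff_lt (a := (Tuple.sort f).symm x) (b := (Tuple.sort f).symm y)).symm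

theorem Nat.card_eq_of_rel {α β : Type*} (R : α → β → Prop) (hα : ∀ a, ∃ b, R a b)
    (hβ : ∀ b, ∃ a, R a b) (hl : ∀ a a' b, R a b → R a' b → a = a')
    (hr : ∀ a b b', R a b → R a b' → b = b') : Nat.card α = Nat.card β := by
  choose f hf using hα
  refine Nat.card_eq_of_bijective f
    ⟨fun a a' h => hl a a' (f a) (hf a) (h ▸ hf a'), fun b => ?_⟩
  obtain ⟨a, ha⟩ := hβ b
  exact ⟨a, hr a _ _ (hf a) ha⟩

theorem Contains.of_comp {α β γ : Type*} [LT α] [LT β] [LT γ] {m n k : ℕ} {v : Fin m → γ}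
    {w : Fin n → α} {p : Fin k → β} (e : Fin m → Fin n) (he : StrictMono e)
    (hvw : ∀ i j, v i < v j ↔ w (e i) < w (e j)) (h : Contains v p) : Contains w p := by
  obtain ⟨f, hf, hp⟩ := h
  exact ⟨e ∘ f, he.comp hf, fun i j => (hp i j).trans (hvw _ _)⟩

section Patterns

variable {α : Type*} [Preorder α] {m : ℕ}

theorem contains_pat132_iff {w : Fin m → α} :
    Contains w pat132 ↔ ∃ x y z, x < y ∧ y < z ∧ w x < w z ∧ w z < w y := by
  constructor
  · rintro ⟨f, hf, hp⟩
    exact ⟨f 0, f 1, f 2, hf (by decide), hf (by decide), (hp 0 2).1 (by decide),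
      (hp 2 1).1 (by decide)⟩
  · rintro ⟨x, y, z, hxy, hyz, hxz, hzy⟩
    refine ⟨![x, y, z], Fin.strictMono_iff_lt_succ.2 ?_, fun i j => ?_⟩
    · simp [Fin.forall_fin_two, hxy, hyz]
    · fin_cases i <;> fin_cases j <;>
        simp [pat132, hxz, hzy, hxz.trans hzy, hxz.not_gt, hzy.not_gt, (hxz.trans hzy).not_gt]

theorem contains_decpat_iff {k : ℕ} {w : Fin m → α} :
    Contains w (decpat k) ↔ ∃ g : Fin k → Fin m, StrictMono g ∧ StrictAnti (w ∘ g) := by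
  have hdec : StrictAnti (decpat k) := fun i j hij => by
    have := j.isLt; simp only [decpat]; omega
  constructor
  · rintro ⟨g, hg, hp⟩
    exact ⟨g, hg, fun i j hij => (hp j i).1 (hdec hij)⟩
  · rintro ⟨g, hg, hwg⟩
    exact ⟨g, hg, fun i j => hdec.lt_iff_gt.trans hwg.lt_iff_gt.symm⟩

theorem contains_decpat_two_iff {w : Fin m → α} :
    Contains w (decpat 2) ↔ ∃ x y, x < y ∧ w y < w x := by
  rw [contains_decpat_iff]
  constructor
  · rintro ⟨g, hg, hwg⟩
    exact ⟨g 0, g 1, hg (by decide), hwg (by decide : (0 : Fin 2) < 1)⟩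
  · rintro ⟨x, y, hxy, hw⟩
    exact ⟨![x, y], Fin.strictMono_iff_lt_succ.2 (by simpa using hxy),
      Fin.strictAnti_iff_succ_lt.2 (by simpa using hw)⟩

theorem contains_decpat_three_iff {w : Fin m → α} :
    Contains w (decpat 3) ↔ ∃ x y z, x < y ∧ y < z ∧ w z < w y ∧ w y < w x := by
  rw [contains_decpat_iff]
  constructor
  · rintro ⟨g, hg, hwg⟩
    exact ⟨g 0, g 1, g 2, hg (by decide), hg (by decide), hwg (by decide : (1 : Fin 3) < 2),
      hwg (by decide : (0 : Fin 3) < 1)⟩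
  · rintro ⟨x, y, z, hxy, hyz, hzy, hyx⟩
    exact ⟨![x, y, z], Fin.strictMono_iff_lt_succ.2 (by simp [Fin.forall_fin_two, hxy, hyz]),
      Fin.strictAnti_iff_succ_lt.2 (by simp [Fin.forall_fin_two, hzy, hyx])⟩

theorem Avoids132.middle_lt_last {n : ℕ} {w : Perm (Fin n)} (h : Avoids132 w)
    {x y z : Fin n} (hxy : x < y) (hyz : y < z) (hxz : w x < w z) : w y < w z := by
  refine lt_of_le_of_ne (not_lt.1 fun hzy => h ?_) fun he => hyz.ne (w.injective he)
  exact contains_pat132_iff.2 ⟨x, y, z, hxy, hyz, hxz, hzy⟩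

end Patterns

section Positions

variable {n : ℕ}

def peakPos (i : Fin n) : Fin (2 * n + 1) := ⟨2 * i + 1, by omega⟩

def valleyPos (j : Fin (n + 1)) : Fin (2 * n + 1) := ⟨2 * j, by omega⟩

theorem peakPos_or_valleyPos (x : Fin (2 * n + 1)) :
    (∃ i, x = peakPos i) ∨ ∃ j, x = valleyPos j := by
  rcases Nat.even_or_odd' x with ⟨i, hi | hi⟩
  · exact .inr ⟨⟨i, by omega⟩, Fin.ext hi⟩
  · exact .inl ⟨⟨i, by omega⟩, Fin.ext hi⟩

@[simp]
theorem peakPos_lt_peakPos {i i' : Fin n} : peakPos i < peakPos i' ↔ i < i' := by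
  rw [Fin.lt_def, Fin.lt_def]; simp [peakPos]

@[simp]
theorem valleyPos_lt_valleyPos {j j' : Fin (n + 1)} : valleyPos j < valleyPos j' ↔ j < j' := by
  rw [Fin.lt_def, Fin.lt_def]; simp [valleyPos]

@[simp]
theorem peakPos_lt_valleyPos {i : Fin n} {j : Fin (n + 1)} :
    peakPos i < valleyPos j ↔ (i : ℕ) < j := by
  rw [Fin.lt_def]; simp only [peakPos, valleyPos]; omega

@[simp]
theorem valleyPos_lt_peakPos {i : Fin n} {j : Fin (n + 1)} :
    valleyPos j < peakPos i ↔ (j : ℕ) ≤ i := by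
  rw [Fin.lt_def]; simp [peakPos, valleyPos]

theorem peakPos_ne_valleyPos (i : Fin n) (j : Fin (n + 1)) : peakPos i ≠ valleyPos j := by
  simp only [peakPos, valleyPos, ne_eq, Fin.ext_iff]; omega

theorem peakPos_strictMono : StrictMono (peakPos (n := n)) := fun _ _ => peakPos_lt_peakPos.2

theorem valleyPos_strictMono : StrictMono (valleyPos (n := n)) :=
  fun _ _ => valleyPos_lt_valleyPos.2

theorem orderIsoEven_iff {w : Perm (Fin (2 * n + 1))} {u : Perm (Fin n)} :
    OrderIsoEven w u ↔ ∀ i j, u i < u j ↔ w (peakPos i) < w (peakPos j) := Iff.rfl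

theorem alternating_iff {w : Perm (Fin (2 * n + 1))} :
    Alternating w ↔ ∀ i : Fin n,
      w (valleyPos i.castSucc) < w (peakPos i) ∧ w (valleyPos i.succ) < w (peakPos i) := by
  constructor
  · intro hA i
    exact ⟨(hA (2 * i) (by omega)).1 (by omega), (hA (2 * i + 1) (by omega)).2 (by omega)⟩
  · intro hA x hx
    refine ⟨fun hx2 => ?_, fun hx2 => ?_⟩
    · convert (hA ⟨x / 2, by omega⟩).1 using 3 <;>
        simp only [peakPos, valleyPos, Fin.castSucc_mk] <;> omega
    · convert (hA ⟨x / 2, by omega⟩).2 using 3 <;>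
        simp only [peakPos, valleyPos, Fin.succ_mk] <;> omega

end Positions

section AlternatingAvoider

variable {n : ℕ} {w : Perm (Fin (2 * n + 1))}

theorem Alternating.valley_castSucc_lt (hA : Alternating w) (i : Fin n) :
    w (valleyPos i.castSucc) < w (peakPos i) :=
  (alternating_iff.1 hA i).1

theorem Alternating.valley_succ_lt (hA : Alternating w) (i : Fin n) :
    w (valleyPos i.succ) < w (peakPos i) :=
  (alternating_iff.1 hA i).2

theorem Alternating.valley_lt_of_lt (hA : Alternating w) (h132 : Avoids132 w)
    {x : Fin (2 * n + 1)} {j : Fin (n + 1)} (hx : x < valleyPos j) :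
    w (valleyPos j) < w x := by
  rcases Fin.eq_zero_or_eq_succ j with rfl | ⟨i, rfl⟩
  · exact absurd hx (by simp [valleyPos])
  have hvp := hA.valley_succ_lt i
  have hxp : x ≤ peakPos i := by
    rw [Fin.lt_def] at hx
    rw [Fin.le_def]
    simp only [valleyPos, Fin.val_succ, peakPos] at hx ⊢
    omega
  rcases hxp.eq_or_lt with rfl | hxp
  · exact hvp
  refine lt_of_le_of_ne (not_lt.1 fun h => ?_) fun he => hx.ne' (w.injective he)
  exact (h132.middle_lt_last hxp (peakPos_lt_valleyPos.2 (by simp)) h).not_gt hvp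

theorem Alternating.strictAnti_valley (hA : Alternating w) (h132 : Avoids132 w) :
    StrictAnti fun j => w (valleyPos j) :=
  fun _ _ hjj => hA.valley_lt_of_lt h132 (valleyPos_strictMono hjj)

theorem Avoids132.peak_lt_valley (h132 : Avoids132 w) {i j : Fin n} (hji : j < i)
    (h : w (peakPos i) < w (peakPos j)) : w (peakPos i) < w (valleyPos j.castSucc) := by
  refine lt_of_le_of_ne (not_lt.1 fun hc => ?_) fun he => peakPos_ne_valleyPos _ _ (w.injective he)
  exact (h132.middle_lt_last (valleyPos_lt_peakPos.2 le_rfl) (peakPos_strictMono hji) hc).not_gt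
    h

theorem Alternating.valley_lt_peak_iff (hA : Alternating w) (h132 : Avoids132 w) {i : Fin n}
    {j : Fin (n + 1)} :
    w (valleyPos j) < w (peakPos i) ↔
      ∃ l : Fin n, (l : ℕ) ≤ j ∧ w (peakPos l) ≤ w (peakPos i) := by
  constructor
  · intro h
    by_cases hij : (i : ℕ) < j
    · exact ⟨i, hij.le, le_rfl⟩
    obtain ⟨j, rfl⟩ : ∃ j' : Fin n, j = j'.castSucc := ⟨⟨j, by omega⟩, rfl⟩
    refine ⟨j, le_rfl, not_lt.1 fun hlt => ?_⟩
    rcases (not_lt.1 hij).eq_or_lt with hji | hji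
    · exact lt_irrefl _ ((Fin.ext (by simpa using hji) : j = i) ▸ hlt)
    · exact (h132.peak_lt_valley hji hlt).not_gt h
  · rintro ⟨l, hlj, hl⟩
    calc w (valleyPos j) ≤ w (valleyPos l.castSucc) :=
          (hA.strictAnti_valley h132).antitone (Fin.le_def.2 hlj)
      _ < w (peakPos l) := hA.valley_castSucc_lt l
      _ ≤ w (peakPos i) := hl

end AlternatingAvoider

section QPattern

theorem qpat_lt_iff {k : ℕ} {x y : Fin (2 * k)} :
    qpat k x < qpat k y ↔
      (y : ℕ) / 2 < (x : ℕ) / 2 ∨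
        (x : ℕ) / 2 = (y : ℕ) / 2 ∧ (x : ℕ) % 2 = 0 ∧ (y : ℕ) % 2 = 1 := by
  simp only [qpat]
  split_ifs <;> omega

theorem qpat_injective (k : ℕ) : Injective (qpat k) := by
  intro x y h
  simp only [qpat] at h
  ext
  split_ifs at h <;> omega

variable {n : ℕ} {w : Perm (Fin (2 * n + 1))}

theorem Alternating.exists_of_contains_qpat (hA : Alternating w) (h132 : Avoids132 w) {k : ℕ}
    (h : Contains ⇑w (qpat k)) :
    ∃ g : Fin k → Fin n, StrictMono g ∧ StrictAnti fun t => w (peakPos (g t)) := by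
  obtain ⟨f, hf, hp⟩ := h
  let top (t : Fin k) : Fin (2 * k) := ⟨2 * t + 1, by omega⟩
  have hpeak : ∀ t, ∃ i, f (top t) = peakPos i := by
    refine fun t => (peakPos_or_valleyPos _).resolve_right ?_
    rintro ⟨j, hj⟩
    have hlt : f ⟨2 * t, by omega⟩ < f (top t) := hf (Fin.mk_lt_mk.2 (Nat.lt_succ_self _))
    have hw := (hp ⟨2 * t, by omega⟩ (top t)).1 (qpat_lt_iff.2 (by simp only [top]; omega))
    rw [hj] at hlt hw
    exact (hA.valley_lt_of_lt h132 hlt).not_gt hw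
  choose g hg using hpeak
  have htop : StrictMono top := fun t t' htt => Fin.mk_lt_mk.2 (by rw [Fin.lt_def] at htt; omega)
  refine ⟨g, fun t t' htt => ?_, fun t t' htt => ?_⟩
  · rw [← peakPos_lt_peakPos, ← hg, ← hg]
    exact hf (htop htt)
  · simp only [← hg]
    exact (hp _ _).1 (qpat_lt_iff.2 (.inl (by rw [Fin.lt_def] at htt; simp only [top]; omega)))

theorem Alternating.contains_qpat (hA : Alternating w) (h132 : Avoids132 w) {k : ℕ}
    {g : Fin k → Fin n} (hg : StrictMono g) (hwg : StrictAnti fun t => w (peakPos (g t))) :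
    Contains ⇑w (qpat k) := by
  let half (x : Fin (2 * k)) : Fin k := ⟨x / 2, by omega⟩
  let F (x : Fin (2 * k)) : Fin (2 * n + 1) :=
    if (x : ℕ) % 2 = 0 then valleyPos (g (half x)).castSucc else peakPos (g (half x))
  have hF : ∀ x, (F x : ℕ) = 2 * g (half x) + x % 2 := by
    intro x; simp only [F]; split_ifs <;> simp only [valleyPos, peakPos, Fin.val_castSucc] <;> omega
  have hhalf : ∀ {x y : Fin (2 * k)}, (x : ℕ) / 2 < (y : ℕ) / 2 → g (half x) < g (half y) :=
    fun h => hg h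
  refine ⟨F, fun x y hxy => ?_, lt_iff_lt_of_lt_imp_lt (qpat_injective k) fun x y hxy => ?_⟩
  · rw [Fin.lt_def, hF, hF]
    rw [Fin.lt_def] at hxy
    rcases Nat.lt_or_ge ((x : ℕ) / 2) (y / 2) with h | h
    · have := hhalf h; rw [Fin.lt_def] at this; omega
    · have : half x = half y := Fin.ext (by simp only [half]; omega)
      rw [this]; omega
  rw [qpat_lt_iff] at hxy
  rcases hxy with hyx | ⟨hxy, hx, hy⟩
  · by_cases hx : (x : ℕ) % 2 = 0
    · simp only [F, if_pos hx]
      refine hA.valley_lt_of_lt h132 ?_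
      have := hhalf hyx
      rw [Fin.lt_def] at this ⊢; rw [hF]; simp only [valleyPos, Fin.val_castSucc]; omega
    · simp only [F, if_neg hx]
      split_ifs
      · exact h132.peak_lt_valley (hhalf hyx) (hwg hyx)
      · exact hwg hyx
  · have : half x = half y := Fin.ext hxy
    simp only [F, if_pos hx, if_neg (show ¬ (y : ℕ) % 2 = 0 by omega), this]
    exact hA.valley_castSucc_lt _

theorem Alternating.contains_qpat_iff (hA : Alternating w) (h132 : Avoids132 w)
    {u : Perm (Fin n)} (hu : OrderIsoEven w u) {k : ℕ} :
    Contains ⇑w (qpat k) ↔ Contains ⇑u (decpat k) := by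
  have hanti : ∀ g : Fin k → Fin n,
      StrictAnti (u ∘ g) ↔ StrictAnti fun t => w (peakPos (g t)) :=
    fun g => forall₂_congr fun t t' => imp_congr_right fun _ => hu _ _
  rw [contains_decpat_iff]
  constructor
  · intro h
    obtain ⟨g, hg, hwg⟩ := hA.exists_of_contains_qpat h132 h
    exact ⟨g, hg, (hanti g).2 hwg⟩
  · rintro ⟨g, hg, hug⟩
    exact hA.contains_qpat h132 hg ((hanti g).1 hug)

end QPattern

section Construction

open Finset

variable {n : ℕ} (u : Perm (Fin n))

noncomputable def prefixMin (j : ℕ) : ℕ∞ :=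
  (univ.filter fun l : Fin n => (l : ℕ) ≤ j).inf fun l => ((u l : ℕ) : ℕ∞)

theorem prefixMin_le_iff {j : ℕ} {i : Fin n} :
    prefixMin u j ≤ ((u i : ℕ) : ℕ∞) ↔
      ∃ l : Fin n, (l : ℕ) ≤ j ∧ u l ≤ u i := by
  rw [prefixMin, Finset.inf_le_iff (ENat.natCast_lt_top _)]
  simp only [mem_filter, mem_univ, true_and, Nat.cast_le, Fin.val_fin_le]

theorem prefixMin_antitone : Antitone (prefixMin u) := fun j j' hjj =>
  Finset.inf_mono fun l hl => by simp only [mem_filter, mem_univ, true_and] at hl ⊢; omega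

/-- Ranking the positions by this key gives the alternating 132-avoider with peak pattern `u`:
valley `j` sits just below the peaks `≥ min (u 0, …, u j)`, and later valleys sit lower. -/
noncomputable def zigzagKey (x : Fin (2 * n + 1)) : ℕ∞ ×ₗ ℕ :=
  if h : (x : ℕ) % 2 = 1 then toLex (((u ⟨x / 2, by omega⟩ : ℕ) : ℕ∞), n + 1)
  else toLex (prefixMin u (x / 2), n - x / 2)

@[simp]
theorem zigzagKey_peakPos (i : Fin n) :
    zigzagKey u (peakPos i) = toLex (((u i : ℕ) : ℕ∞), n + 1) := by
  simp [zigzagKey, peakPos, Nat.mul_add_div]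

@[simp]
theorem zigzagKey_valleyPos (j : Fin (n + 1)) :
    zigzagKey u (valleyPos j) = toLex (prefixMin u j, n - j) := by
  simp [zigzagKey, valleyPos]

theorem zigzagKey_peak_lt_peak_iff {i i' : Fin n} :
    zigzagKey u (peakPos i) < zigzagKey u (peakPos i') ↔ u i < u i' := by
  rw [zigzagKey_peakPos, zigzagKey_peakPos, Prod.Lex.toLex_lt_toLex, Fin.lt_def]
  simp

theorem zigzagKey_valley_lt_peak_iff {i : Fin n} {j : Fin (n + 1)} :
    zigzagKey u (valleyPos j) < zigzagKey u (peakPos i) ↔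
      ∃ l : Fin n, (l : ℕ) ≤ j ∧ u l ≤ u i := by
  rw [zigzagKey_peakPos, zigzagKey_valleyPos, Prod.Lex.toLex_lt_toLex, ← prefixMin_le_iff]
  simp only [show n - j < n + 1 by omega, and_true]
  exact le_iff_lt_or_eq.symm

theorem zigzagKey_strictAnti_valley : StrictAnti fun j => zigzagKey u (valleyPos j) := by
  intro j j' hjj
  simp only [zigzagKey_valleyPos, Prod.Lex.toLex_lt_toLex]
  rcases (prefixMin_antitone u (Fin.le_def.1 hjj.le)).lt_or_eq with h | h
  · exact .inl h
  · exact .inr ⟨h, by rw [Fin.lt_def] at hjj; omega⟩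

theorem zigzagKey_injective : Injective (zigzagKey u) := by
  intro x y h
  rcases peakPos_or_valleyPos x with ⟨i, rfl⟩ | ⟨j, rfl⟩ <;>
    rcases peakPos_or_valleyPos y with ⟨i', rfl⟩ | ⟨j', rfl⟩ <;>
    simp only [zigzagKey_peakPos, zigzagKey_valleyPos, toLex_inj, Prod.mk.injEq] at h
  · obtain rfl : i = i' := u.injective (Fin.ext (by exact_mod_cast h.1))
    rfl
  · omega
  · omega
  · rw [Fin.ext (by omega : (j : ℕ) = j')]

theorem zigzagKey_valley_lt_of_lt {x : Fin (2 * n + 1)} {j : Fin (n + 1)}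
    (hx : x < valleyPos j) :
    zigzagKey u (valleyPos j) < zigzagKey u x := by
  rcases peakPos_or_valleyPos x with ⟨i, rfl⟩ | ⟨j', rfl⟩
  · exact (zigzagKey_valley_lt_peak_iff u).2 ⟨i, (peakPos_lt_valleyPos.1 hx).le, le_rfl⟩
  · exact zigzagKey_strictAnti_valley u (valleyPos_lt_valleyPos.1 hx)

theorem exists_le_of_zigzagKey_lt_peak {x : Fin (2 * n + 1)} {i : Fin n}
    (hx : zigzagKey u x < zigzagKey u (peakPos i)) :
    ∃ l : Fin n, valleyPos l.castSucc ≤ x ∧ u l ≤ u i := by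
  rcases peakPos_or_valleyPos x with ⟨i', rfl⟩ | ⟨j, rfl⟩
  · exact ⟨i', (valleyPos_lt_peakPos.2 le_rfl).le, ((zigzagKey_peak_lt_peak_iff u).1 hx).le⟩
  · obtain ⟨l, hlj, hl⟩ := (zigzagKey_valley_lt_peak_iff u).1 hx
    exact ⟨l, valleyPos_strictMono.monotone (Fin.le_def.2 hlj), hl⟩

theorem avoids132_of_lt_iff_zigzagKey_lt (h132 : Avoids132 u) {w : Perm (Fin (2 * n + 1))}
    (hw : ∀ x y, w x < w y ↔ zigzagKey u x < zigzagKey u y) : Avoids132 w := by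
  rw [Avoids132, contains_pat132_iff]
  rintro ⟨x, y, z, hxy, hyz, hxz, hzy⟩
  rw [hw] at hxz hzy
  rcases peakPos_or_valleyPos z with ⟨i'', rfl⟩ | ⟨j, rfl⟩
  swap
  · exact (zigzagKey_valley_lt_of_lt u (hxy.trans hyz)).not_gt hxz
  obtain ⟨l, hlx, hl⟩ := exists_le_of_zigzagKey_lt_peak u hxz
  rcases peakPos_or_valleyPos y with ⟨i', rfl⟩ | ⟨j', rfl⟩
  · rw [zigzagKey_peak_lt_peak_iff] at hzy
    have hli' : l < i' := by
      have : (l : ℕ) ≤ i' := valleyPos_lt_peakPos.1 (hlx.trans_lt hxy)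
      refine lt_of_le_of_ne (Fin.le_def.2 this) fun he => ?_
      exact (he ▸ hl).not_gt hzy
    have hi'' : i' < i'' := peakPos_lt_peakPos.1 hyz
    have hli'' : u l < u i'' := lt_of_le_of_ne hl fun he => (hli'.trans hi'').ne (u.injective he)
    exact (h132.middle_lt_last hli' hi'' hli'').not_gt hzy
  · refine hzy.not_gt ((zigzagKey_valley_lt_peak_iff u).2 ⟨l, ?_, hl⟩)
    exact (valleyPos_lt_valleyPos.1 (hlx.trans_lt hxy)).le

theorem exists_alternating_of_avoids132 (h132 : Avoids132 u) :
    ∃ w : Perm (Fin (2 * n + 1)), Alternating w ∧ Avoids132 w ∧ OrderIsoEven w u := by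
  obtain ⟨w, hw⟩ := exists_perm_lt_iff_lt (zigzagKey_injective u)
  refine ⟨w, alternating_iff.2 fun i => ?_, avoids132_of_lt_iff_zigzagKey_lt u h132 hw,
    orderIsoEven_iff.2 fun i i' => by rw [hw, zigzagKey_peak_lt_peak_iff]⟩
  simp only [hw, zigzagKey_valley_lt_peak_iff]
  exact ⟨⟨i, by simp, le_rfl⟩, ⟨i, by simp, le_rfl⟩⟩

variable {u}

theorem Alternating.lt_iff_zigzagKey_lt {w : Perm (Fin (2 * n + 1))} (hA : Alternating w)
    (h132 : Avoids132 w) (hu : OrderIsoEven w u) (x y : Fin (2 * n + 1)) :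
    w x < w y ↔ zigzagKey u x < zigzagKey u y := by
  rw [orderIsoEven_iff] at hu
  have hvp : ∀ i j, w (valleyPos j) < w (peakPos i) ↔
      zigzagKey u (valleyPos j) < zigzagKey u (peakPos i) := by
    intro i j
    rw [hA.valley_lt_peak_iff h132, zigzagKey_valley_lt_peak_iff]
    simp only [← not_lt, ← hu]
  refine lt_iff_lt_of_lt_imp_lt w.injective (fun x y hxy => ?_) x y
  rcases peakPos_or_valleyPos x with ⟨i, rfl⟩ | ⟨j, rfl⟩ <;>
    rcases peakPos_or_valleyPos y with ⟨i', rfl⟩ | ⟨j', rfl⟩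
  · rwa [zigzagKey_peak_lt_peak_iff, hu]
  · refine lt_of_le_of_ne (not_lt.1 fun h => ((hvp i j').2 h).not_gt hxy) fun he => ?_
    exact peakPos_ne_valleyPos _ _ (zigzagKey_injective u he)
  · exact (hvp i' j).1 hxy
  · exact zigzagKey_strictAnti_valley u ((hA.strictAnti_valley h132).lt_iff_gt.1 hxy)

theorem Alternating.eq_of_orderIsoEven {w w' : Perm (Fin (2 * n + 1))} (hA : Alternating w)
    (h132 : Avoids132 w) (hA' : Alternating w') (h132' : Avoids132 w') (hu : OrderIsoEven w u)
    (hu' : OrderIsoEven w' u) : w = w' :=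
  Equiv.Perm.eq_of_lt_iff_lt fun x y =>
    (hA.lt_iff_zigzagKey_lt h132 hu x y).trans (hA'.lt_iff_zigzagKey_lt h132' hu' x y).symm

end Construction

theorem card_alternating_avoiding_qpat (n k : ℕ) :
    Nat.card {w : Perm (Fin (2 * n + 1)) //
        Alternating w ∧ Avoids132 w ∧ ¬ Contains (fun i => w i) (qpat k)} =
      Nat.card {u : Perm (Fin n) // Avoids132 u ∧ ¬ Contains (fun i => u i) (decpat k)} := by
  refine Nat.card_eq_of_rel (fun w u => OrderIsoEven w.1 u.1) ?_ ?_ ?_ ?_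
  · rintro ⟨w, hA, h132, hq⟩
    obtain ⟨u, hu⟩ :=
      exists_perm_lt_iff_lt (w.injective.comp (peakPos_strictMono (n := n)).injective)
    have hu' : OrderIsoEven w u := hu
    exact ⟨⟨u, fun h => h132 (h.of_comp peakPos peakPos_strictMono hu),
      fun h => hq ((hA.contains_qpat_iff h132 hu').2 h)⟩, hu'⟩
  · rintro ⟨u, h132, hdec⟩
    obtain ⟨w, hA, hw132, hu⟩ := exists_alternating_of_avoids132 u h132
    exact ⟨⟨w, hA, hw132, fun h => hdec ((hA.contains_qpat_iff hw132 hu).1 h)⟩, hu⟩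
  · rintro ⟨w, hA, h132, _⟩ ⟨w', hA', h132', _⟩ ⟨u, _⟩ hu hu'
    exact Subtype.ext (hA.eq_of_orderIsoEven h132 hA' h132' hu hu')
  · rintro ⟨w, _⟩ ⟨u, _⟩ ⟨u', _⟩ hu hu'
    exact Subtype.ext (Equiv.Perm.eq_of_lt_iff_lt fun i j => (hu i j).trans (hu' i j).symm)

theorem eq_one_of_not_contains_decpat_two {n : ℕ} {u : Perm (Fin n)}
    (h : ¬ Contains ⇑u (decpat 2)) : u = 1 := by
  have hmono : StrictMono u := fun x y hxy =>
    lt_of_le_of_ne (not_lt.1 fun hyx => h (contains_decpat_two_iff.2 ⟨x, y, hxy, hyx⟩))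
      (u.injective.ne hxy.ne)
  exact Equiv.ext fun x => hmono.apply_eq

theorem card_avoids132_avoids21 (n : ℕ) :
    Nat.card {u : Perm (Fin n) // Avoids132 u ∧ ¬ Contains (fun i => u i) (decpat 2)} = 1 := by
  rw [Nat.card_eq_one_iff_exists]
  refine ⟨⟨1, ?_, ?_⟩, fun u => Subtype.ext (eq_one_of_not_contains_decpat_two u.2.2)⟩
  · rw [Avoids132, contains_pat132_iff]
    rintro ⟨x, y, z, -, hyz, -, hzy⟩
    exact hzy.not_gt hyz
  · rw [contains_decpat_two_iff]
    rintro ⟨x, y, hxy, hyx⟩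
    exact hyx.not_gt hxy

section BlockSwap

variable {n p c : ℕ}

/-- The permutation `c (c+1) ⋯ (c+p-1) 0 1 ⋯ (c-1) (p+c) ⋯ (n-1)`. -/
def swapBlocks (n p c : ℕ) (h : p + c ≤ n) : Perm (Fin n) where
  toFun x := ⟨if (x : ℕ) < p then x + c else if (x : ℕ) < p + c then x - p else x,
    by split_ifs <;> omega⟩
  invFun y := ⟨if (y : ℕ) < c then y + p else if (y : ℕ) < p + c then y - c else y,
    by split_ifs <;> omega⟩
  left_inv x := Fin.ext (by simp only; split_ifs <;> omega)
  right_inv y := Fin.ext (by simp only; split_ifs <;> omega)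

theorem swapBlocks_apply (h : p + c ≤ n) (x : Fin n) :
    (swapBlocks n p c h x : ℕ) =
      if (x : ℕ) < p then x + c else if (x : ℕ) < p + c then x - p else x :=
  rfl

theorem avoids132_swapBlocks (h : p + c ≤ n) : Avoids132 (swapBlocks n p c h) := by
  rw [Avoids132, contains_pat132_iff]
  rintro ⟨x, y, z, hxy, hyz, hxz, hzy⟩
  rw [Fin.lt_def] at hxy hyz hxz hzy
  rw [swapBlocks_apply, swapBlocks_apply] at hxz hzy
  split_ifs at hxz hzy <;> omega

theorem not_contains_decpat_three_swapBlocks (h : p + c ≤ n) :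
    ¬ Contains ⇑(swapBlocks n p c h) (decpat 3) := by
  rw [contains_decpat_three_iff]
  rintro ⟨x, y, z, hxy, hyz, hzy, hyx⟩
  rw [Fin.lt_def] at hxy hyz hzy hyx
  rw [swapBlocks_apply, swapBlocks_apply] at hzy hyx
  split_ifs at hzy hyx <;> omega

end BlockSwap

section AvoidingBoth

variable {n : ℕ} {u : Perm (Fin n)} {z : Fin n}

theorem strictMonoOn_Iio_of_not_contains_decpat_three (h321 : ¬ Contains ⇑u (decpat 3))
    (hz : (u z : ℕ) = 0) : StrictMonoOn u (Set.Iio z) := by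
  intro x _ y hyz hxy
  refine lt_of_le_of_ne (not_lt.1 fun hyx => h321 ?_) (u.injective.ne hxy.ne)
  refine contains_decpat_three_iff.2 ⟨x, y, z, hxy, hyz, ?_, hyx⟩
  rw [Fin.lt_def, hz]
  exact Nat.pos_of_ne_zero fun h => hyz.ne (u.injective (Fin.ext (h.trans hz.symm)))

theorem strictMonoOn_Ici_of_avoids132 (h132 : Avoids132 u) (hz : (u z : ℕ) = 0) :
    StrictMonoOn u (Set.Ici z) := by
  intro x hx y _ hxy
  have hzy : u z < u y := by
    rw [Fin.lt_def, hz]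
    exact Nat.pos_of_ne_zero fun h =>
      (hxy.trans_le' hx).ne (u.injective (Fin.ext (hz.trans h.symm)))
  rcases (Set.mem_Ici.1 hx).eq_or_lt with rfl | hzx
  · exact hzy
  · exact h132.middle_lt_last hzx hxy hzy

theorem val_add_eq_of_lt_val_zero (h132 : Avoids132 u) (h321 : ¬ Contains ⇑u (decpat 3))
    (hz : (u z : ℕ) = 0) {t : ℕ} (ht : t < u ⟨0, z.pos⟩) :
    ∃ h : (z : ℕ) + t < n, (u ⟨z + t, h⟩ : ℕ) = t := by
  induction t using Nat.strong_induction_on with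
  | _ t ih =>
  -- The value `t` is not left of `z`, where all values are `≥ u 0`, nor in `[z, z + t)`, which
  -- holds `0, …, t - 1`; right of `z + t` it would force `u (z + t) < t`, a value already placed.
  set y := u.symm ⟨t, by omega⟩
  have huy : (u y : ℕ) = t := by simp [y]
  have hzy : z ≤ y := not_lt.1 fun hyz => by
    rcases Nat.eq_zero_or_pos (y : ℕ) with hy | hy
    · rw [show y = ⟨0, z.pos⟩ from Fin.ext hy] at huy; omega
    · have := strictMonoOn_Iio_of_not_contains_decpat_three h321 hz
        (show ⟨0, z.pos⟩ < z from Fin.lt_def.2 (by simp only; omega)) hyz (Fin.lt_def.2 hy)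
      rw [Fin.lt_def] at this; omega
  have hyt : (y : ℕ) = z + t := by
    rw [Fin.le_def] at hzy
    rcases lt_trichotomy (y : ℕ) (z + t) with hlt | heq | hgt
    · obtain ⟨_, hs⟩ := ih (y - z) (by omega) (by omega)
      rw [show (⟨z + (y - z), _⟩ : Fin n) = y from Fin.ext (by simp only; omega)] at hs
      omega
    · exact heq
    · have hlt := strictMonoOn_Ici_of_avoids132 h132 hz
        (show z ≤ ⟨z + t, by omega⟩ from Fin.le_def.2 (by simp)) hzy (Fin.lt_def.2 hgt)
      rw [Fin.lt_def, huy] at hlt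
      obtain ⟨_, hs⟩ := ih _ hlt (by omega)
      have := congrArg Fin.val (u.injective (Fin.ext hs))
      simp only [Nat.add_left_cancel_iff] at this; omega
  exact ⟨by omega, by rw [show (⟨z + t, _⟩ : Fin n) = y from Fin.ext hyt.symm, huy]⟩

theorem add_val_zero_le (h132 : Avoids132 u) (h321 : ¬ Contains ⇑u (decpat 3))
    (hz : (u z : ℕ) = 0) : (z : ℕ) + u ⟨0, z.pos⟩ ≤ n := by
  rcases Nat.eq_zero_or_pos (u ⟨0, z.pos⟩ : ℕ) with h0 | hpos
  · omega
  · obtain ⟨h, -⟩ := val_add_eq_of_lt_val_zero h132 h321 hz (Nat.sub_one_lt_of_lt hpos)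
    omega

theorem val_lt_val_zero_iff (h132 : Avoids132 u) (h321 : ¬ Contains ⇑u (decpat 3))
    (hz : (u z : ℕ) = 0) {y : Fin n} (hzy : z ≤ y) :
    (u y : ℕ) < u ⟨0, z.pos⟩ ↔ (y : ℕ) < z + u ⟨0, z.pos⟩ := by
  rw [Fin.le_def] at hzy
  constructor
  · intro hy
    obtain ⟨_, hs⟩ := val_add_eq_of_lt_val_zero h132 h321 hz hy
    have := congrArg Fin.val (u.injective (Fin.ext hs))
    simp only at this; omega
  · intro hy
    obtain ⟨_, hs⟩ := val_add_eq_of_lt_val_zero h132 h321 hz (t := y - z) (by omega)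
    rw [show (⟨z + (y - z), _⟩ : Fin n) = y from Fin.ext (by simp only; omega)] at hs
    omega

theorem eq_swapBlocks (h132 : Avoids132 u) (h321 : ¬ Contains ⇑u (decpat 3))
    (hz : (u z : ℕ) = 0) :
    u = swapBlocks n z (u ⟨0, z.pos⟩) (add_val_zero_le h132 h321 hz) := by
  set x₀ : Fin n := ⟨0, z.pos⟩
  have hinc := strictMonoOn_Iio_of_not_contains_decpat_three h321 hz
  have hinc' := strictMonoOn_Ici_of_avoids132 h132 hz
  have hlarge : ∀ x : Fin n, x < z → u x₀ ≤ u x := by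
    intro x hx
    rcases Nat.eq_zero_or_pos (x : ℕ) with h0 | hpos
    · rw [show x = x₀ from Fin.ext h0]
    · exact (hinc (show x₀ < z from Fin.lt_def.2 (by simp only [x₀]; omega)) hx
        (Fin.lt_def.2 hpos)).le
  refine Equiv.Perm.eq_of_lt_iff_lt fun x y =>
    (lt_iff_lt_of_lt_imp_lt (Equiv.injective _) (fun x y hxy => ?_) x y).symm
  rw [Fin.lt_def, swapBlocks_apply, swapBlocks_apply] at hxy
  by_cases hx : (x : ℕ) < z <;> by_cases hy : (y : ℕ) < z <;>
    simp only [hx, hy, if_true, if_false] at hxy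
  · exact hinc (Fin.lt_def.2 hx) (Fin.lt_def.2 hy) (Fin.lt_def.2 (by omega))
  · split_ifs at hxy with hyc
    · omega
    have hcy : u x₀ < u y := lt_of_le_of_ne
      (not_lt.1 fun h => hyc ((val_lt_val_zero_iff h132 h321 hz (Fin.le_def.2 (by omega))).1 h))
      fun he => by have := congrArg Fin.val (u.injective he); simp only [x₀] at this; omega
    rcases Nat.eq_zero_or_pos (x : ℕ) with h0 | hpos
    · rwa [show x = x₀ from Fin.ext h0]
    · exact h132.middle_lt_last (Fin.lt_def.2 hpos) (Fin.lt_def.2 (by omega)) hcy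
  · split_ifs at hxy with hxc
    · have := (val_lt_val_zero_iff h132 h321 hz (Fin.le_def.2 (by omega))).2 hxc
      exact Fin.lt_def.2 (this.trans_le (hlarge y (Fin.lt_def.2 hy)))
    · omega
  · exact hinc' (Fin.le_def.2 (by omega)) (Fin.le_def.2 (by omega))
      (Fin.lt_def.2 (by split_ifs at hxy <;> omega))

end AvoidingBoth

section CountBoth

variable {n : ℕ}

theorem swapBlocks_symm_apply {p c : ℕ} (h : p + c ≤ n) (y : Fin n) :
    ((swapBlocks n p c h).symm y : ℕ) =
      if (y : ℕ) < c then y + p else if (y : ℕ) < p + c then y - c else y :=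
  rfl

/-- `none` gives the identity, a pair `a < b` the permutation
`(a+1) ⋯ b 0 ⋯ a (b+1) ⋯ (n-1)`. -/
def swapBlocksOfPair : Option {x : Fin n × Fin n // x.1 < x.2} → Perm (Fin n)
  | none => swapBlocks n 0 0 (Nat.zero_le n)
  | some x => swapBlocks n (x.1.2 - x.1.1) (x.1.1 + 1) (by have := x.2; have := x.1.2.isLt; omega)

theorem swapBlocksOfPair_injective : Injective (swapBlocksOfPair (n := n)) := by
  have hval : ∀ x : {x : Fin n × Fin n // x.1 < x.2},
      (swapBlocksOfPair (some x) ⟨0, x.1.1.pos⟩ : ℕ) = x.1.1 + 1 ∧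
        ((swapBlocksOfPair (some x)).symm ⟨0, x.1.1.pos⟩ : ℕ) = x.1.2 - x.1.1 := by
    rintro ⟨⟨a, b⟩, hab⟩
    have hab' : (a : ℕ) < b := hab
    simp only [swapBlocksOfPair, swapBlocks_apply, swapBlocks_symm_apply]
    constructor <;> split_ifs <;> omega
  have hnone : ∀ x : {x : Fin n × Fin n // x.1 < x.2},
      swapBlocksOfPair (some x) ≠ swapBlocksOfPair none := by
    intro x h
    have := (hval x).1
    rw [h] at this
    simp [swapBlocksOfPair, swapBlocks_apply] at this
  rintro (_ | x) (_ | y) h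
  · rfl
  · exact absurd h.symm (hnone y)
  · exact absurd h (hnone x)
  · obtain ⟨ha, hb⟩ := hval x
    rw [h, (hval y).1] at ha
    rw [h, (hval y).2] at hb
    congr
    ext <;> omega

theorem exists_swapBlocksOfPair_eq {u : Perm (Fin n)} (h132 : Avoids132 u)
    (h321 : ¬ Contains ⇑u (decpat 3)) : ∃ o, swapBlocksOfPair o = u := by
  rcases Nat.eq_zero_or_pos n with rfl | hn
  · exact ⟨none, Subsingleton.elim _ _⟩
  set z := u.symm ⟨0, hn⟩
  have hz : (u z : ℕ) = 0 := by simp [z]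
  have h := add_val_zero_le h132 h321 hz
  rw [eq_swapBlocks h132 h321 hz]
  rcases Nat.eq_zero_or_pos (z : ℕ) with hz0 | hzpos
  · refine ⟨none, ?_⟩
    have hc0 : (u ⟨0, z.pos⟩ : ℕ) = 0 := by
      rwa [show (⟨0, z.pos⟩ : Fin n) = z from Fin.ext hz0.symm]
    simp only [swapBlocksOfPair]
    congr 1 <;> omega
  · have hc : (u ⟨0, z.pos⟩ : ℕ) ≠ 0 := fun h0 => by
      have := congrArg Fin.val (u.injective (Fin.ext (h0.trans hz.symm)))
      simp only at this; omega
    let a : Fin n := ⟨u ⟨0, z.pos⟩ - 1, by omega⟩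
    let b : Fin n := ⟨z + u ⟨0, z.pos⟩ - 1, by omega⟩
    refine ⟨some ⟨(a, b), Fin.lt_def.2 (by simp only [a, b]; omega)⟩, ?_⟩
    simp only [swapBlocksOfPair]
    congr 1 <;> simp only [a, b] <;> omega

theorem card_avoids132_avoids321 (n : ℕ) :
    Nat.card {u : Perm (Fin n) // Avoids132 u ∧ ¬ Contains (fun i => u i) (decpat 3)} =
      (n ^ 2 - n + 2) / 2 := by
  have hmem : ∀ o, Avoids132 (swapBlocksOfPair (n := n) o) ∧
      ¬ Contains ⇑(swapBlocksOfPair o) (decpat 3) := by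
    rintro (_ | x) <;> simp only [swapBlocksOfPair] <;>
      exact ⟨avoids132_swapBlocks _, not_contains_decpat_three_swapBlocks _⟩
  rw [← Nat.card_eq_of_bijective (fun o => ⟨swapBlocksOfPair o, hmem o⟩)
    ⟨fun o o' h => swapBlocksOfPair_injective (congrArg Subtype.val h), fun u => ?_⟩]
  · rw [Nat.card_eq_fintype_card, Fintype.card_option, Fintype.card_subtype,
      Fintype.card_product_filter_lt, Fintype.card_fin, Nat.choose_two_right, sq,
      ← Nat.mul_sub_one, Nat.add_div_right _ two_pos]
  · obtain ⟨o, ho⟩ := exists_swapBlocksOfPair_eq u.2.1 u.2.2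
    exact ⟨o, Subtype.ext ho⟩

end CountBoth

theorem stmt17_general (n k : ℕ) :
    (Nat.card {w : Equiv.Perm (Fin (2 * n + 1)) //
        Alternating w ∧ Avoids132 w ∧ ¬ Contains (fun i => w i) (qpat k)} =
      Nat.card {w : Equiv.Perm (Fin n) //
        Avoids132 w ∧ ¬ Contains (fun i => w i) (decpat k)}) ∧
    Nat.card {w : Equiv.Perm (Fin (2 * n + 1)) //
        Alternating w ∧ Avoids132 w ∧ ¬ Contains (fun i => w i) (qpat 2)} = 1 ∧
    (1 ≤ n →
      Nat.card {w : Equiv.Perm (Fin (2 * n + 1)) //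
          Alternating w ∧ Avoids132 w ∧ ¬ Contains (fun i => w i) (qpat 3)} =
        (n ^ 2 - n + 2) / 2) :=
  ⟨card_alternating_avoiding_qpat n k,
    (card_alternating_avoiding_qpat n 2).trans (card_avoids132_avoids21 n),
    fun _ => (card_alternating_avoiding_qpat n 3).trans (card_avoids132_avoids321 n)⟩

/-- `a_{2n+1}(132, q_k) = s_n(132, k(k-1)⋯21)` for `k ≥ 2`; in
particular `a_{2n+1}(132, 3412) = 1` and `a_{2n+1}(132, 563412) = (n²-n+2)/2`
for `n ≥ 1`. -/
theorem stmt17 (n k : ℕ) (hk : 2 ≤ k) :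
    (Nat.card {w : Equiv.Perm (Fin (2 * n + 1)) //
        Alternating w ∧ Avoids132 w ∧ ¬ Contains (fun i => w i) (qpat k)} =
      Nat.card {w : Equiv.Perm (Fin n) //
        Avoids132 w ∧ ¬ Contains (fun i => w i) (decpat k)}) ∧
    Nat.card {w : Equiv.Perm (Fin (2 * n + 1)) //
        Alternating w ∧ Avoids132 w ∧ ¬ Contains (fun i => w i) (qpat 2)} = 1 ∧
    (1 ≤ n →
      Nat.card {w : Equiv.Perm (Fin (2 * n + 1)) //
          Alternating w ∧ Avoids132 w ∧ ¬ Contains (fun i => w i) (qpat 3)} =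
        (n ^ 2 - n + 2) / 2) :=
  stmt17_general n k
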